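/- Let Q and Q_n be quantizers on ℝ^d with convex cells B_1,…,B_M and B_1^n,…,B_M^n respectively, and let P be a probability measure on ℝ^d admitting a density. If PQ_n → PQ weakly, then P(B_i^n △ B_i) → 0 for every i, and consequently PQ_n → PQ in total variation. -/

import Mathlib

/-!
Once `PQₙ → PQ` weakly, the probability `P(Qₙ ≠ Q)` of disagreement tends to zero, and both
conclusions follow: `Bᵢⁿ △ Bᵢ ⊆ {Qₙ ≠ Q}`, and two pushforwards of `P` under maps agreeing
off a set `S` differ by at most `P(S)` on every set. Now `P(Qₙ ≠ Q)` is the `PQₙ`-mass of the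
off-graph set `D = {(x, j) | j ≠ Q x}`, whose `PQ`-mass is zero. Since `Fin M` is discrete, the
frontier of `D` lies over the union of the cell frontiers `∂Bᵢ`, which are Lebesgue-null by
convexity, hence `P`-null; the portmanteau theorem then gives `PQₙ(D) → PQ(D) = 0`.
-/

open MeasureTheory Filter Topology BoundedContinuousFunction

/-- Total variation distance: `2 sup_B |μ(B) − ν(B)|`. -/
noncomputable def dTV {X : Type*} [MeasurableSpace X] (μ ν : Measure X) : ℝ :=
  2 * ⨆ B : Set X, |(μ B).toReal - (ν B).toReal|

open Set

lemma preimage_singleton_symmDiff_subset {α β : Type*} (f g : α → β) (b : β) :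
    symmDiff (f ⁻¹' {b}) (g ⁻¹' {b}) ⊆ {x | f x ≠ g x} := by
  rintro x (⟨hf, hg⟩ | ⟨hg, hf⟩)
  exacts [fun e => hg (e.symm.trans hf), fun e => hf (e.trans hg)]

section TotalVariation

variable {α β : Type*} [MeasurableSpace α] [MeasurableSpace β]

lemma dTV_nonneg (μ ν : Measure β) : 0 ≤ dTV μ ν :=
  mul_nonneg zero_le_two (Real.iSup_nonneg fun _ => abs_nonneg _)

lemma map_apply_le_map_apply_add_measure_ne {μ : Measure α} {φ ψ : α → β} (hφ : Measurable φ)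
    (hψ : Measurable ψ) (C : Set β) :
    μ.map φ C ≤ μ.map ψ C + μ {x | φ x ≠ ψ x} := by
  set D := toMeasurable (μ.map ψ) C
  have hD : MeasurableSet D := measurableSet_toMeasurable _ _
  calc μ.map φ C ≤ μ.map φ D := measure_mono (subset_toMeasurable _ _)
    _ = μ (φ ⁻¹' D) := Measure.map_apply hφ hD
    _ ≤ μ (ψ ⁻¹' D ∪ {x | φ x ≠ ψ x}) := by
      refine measure_mono fun x hx => ?_
      by_cases h : φ x = ψ x
      · exact Or.inl (by simpa [h] using hx)
      · exact Or.inr h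
    _ ≤ μ (ψ ⁻¹' D) + μ {x | φ x ≠ ψ x} := measure_union_le _ _
    _ = μ.map ψ C + μ {x | φ x ≠ ψ x} := by
      rw [← Measure.map_apply hψ hD, measure_toMeasurable]

lemma dTV_map_le {μ : Measure α} [IsFiniteMeasure μ] {φ ψ : α → β} (hφ : Measurable φ)
    (hψ : Measurable ψ) : dTV (μ.map φ) (μ.map ψ) ≤ 2 * (μ {x | φ x ≠ ψ x}).toReal := by
  refine mul_le_mul_of_nonneg_left (ciSup_le fun C => ?_) zero_le_two
  rw [abs_sub_le_iff]
  constructor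
  · have := ENNReal.toReal_le_add (map_apply_le_map_apply_add_measure_ne (μ := μ) hφ hψ C)
      (measure_ne_top _ _) (measure_ne_top _ _)
    linarith
  · have := ENNReal.toReal_le_add (map_apply_le_map_apply_add_measure_ne (μ := μ) hψ hφ C)
      (measure_ne_top _ _) (measure_ne_top _ _)
    simp_rw [ne_comm] at this
    linarith

end TotalVariation

section Graph

variable {X Y ι : Type*} [TopologicalSpace X] [TopologicalSpace Y] [DiscreteTopology Y]

lemma isOpenMap_prodMk_right (y : Y) : IsOpenMap fun x : X => (x, y) := fun U hU => by
  rw [← prod_singleton]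
  exact hU.prod (isOpen_discrete _)

lemma frontier_setOf_ne_graph_subset (f : X → Y) :
    frontier {z : X × Y | z.2 ≠ f z.1} ⊆ {z | z.1 ∈ frontier (f ⁻¹' {z.2})} := by
  rintro ⟨x, y⟩ hz
  have hslice : (fun x => (x, y)) ⁻¹' {z : X × Y | z.2 ≠ f z.1} = (f ⁻¹' {y})ᶜ := by
    ext; simp [eq_comm]
  have hx : x ∈ (fun x => (x, y)) ⁻¹' frontier {z : X × Y | z.2 ≠ f z.1} := hz
  rwa [(isOpenMap_prodMk_right y).preimage_frontier_eq_frontier_preimage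
    (continuous_id.prodMk continuous_const), hslice, frontier_compl] at hx

variable [MeasurableSpace X] [MeasurableSpace Y] [MeasurableSingletonClass Y] [Countable Y]
  [OpensMeasurableSpace (X × Y)] [HasOuterApproxClosed (X × Y)]

theorem tendsto_measure_ne_of_tendsto_map_graph {L : Filter ι} {P : Measure X}
    [IsProbabilityMeasure P] {f : X → Y} {fs : ι → X → Y} (hf : Measurable f)
    (hfs : ∀ n, Measurable (fs n)) (hfront : ∀ y, P (frontier (f ⁻¹' {y})) = 0)
    (hweak : ∀ g : (X × Y) →ᵇ ℝ,
      Tendsto (fun n => ∫ z, g z ∂(P.map fun x => (x, fs n x))) L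
        (𝓝 (∫ z, g z ∂(P.map fun x => (x, f x))))) :
    Tendsto (fun n => P {x | fs n x ≠ f x}) L (𝓝 0) := by
  have hgraph : Measurable fun x => (x, f x) := measurable_id.prodMk hf
  have hgraphs n : Measurable fun x => (x, fs n x) := measurable_id.prodMk (hfs n)
  let μ : ProbabilityMeasure (X × Y) :=
    ⟨P.map fun x => (x, f x), Measure.isProbabilityMeasure_map hgraph.aemeasurable⟩
  let μs n : ProbabilityMeasure (X × Y) :=
    ⟨P.map fun x => (x, fs n x), Measure.isProbabilityMeasure_map (hgraphs n).aemeasurable⟩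
  have hlim : Tendsto μs L (𝓝 μ) := ProbabilityMeasure.tendsto_iff_forall_integral_tendsto.mpr hweak
  set D := {z : X × Y | z.2 ≠ f z.1}
  have hD : MeasurableSet D := (measurableSet_eq_fun measurable_snd (hf.comp measurable_fst)).compl
  have hfrontD : (μ : Measure (X × Y)) (frontier D) = 0 := by
    change P.map _ _ = 0
    rw [Measure.map_apply hgraph isClosed_frontier.measurableSet]
    refine measure_mono_null (fun x hx => ?_) (measure_iUnion_null hfront)
    exact mem_iUnion.mpr ⟨f x, frontier_setOf_ne_graph_subset f hx⟩
  have key := ProbabilityMeasure.tendsto_measure_of_null_frontier_of_tendsto' hlim hfrontD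
  simpa [μ, μs, Measure.map_apply hgraph hD, Measure.map_apply (hgraphs _) hD, D, ne_comm] using key

end Graph

theorem convex_cell_weak_to_tv_general
    (d M : ℕ) (P : Measure (EuclideanSpace ℝ (Fin d))) [IsProbabilityMeasure P]
    (hP : P ≪ volume)
    (Q : EuclideanSpace ℝ (Fin d) → Fin M) (Qn : ℕ → EuclideanSpace ℝ (Fin d) → Fin M)
    (hQ : Measurable Q) (hQn : ∀ n, Measurable (Qn n))
    (hQconv : ∀ i, Convex ℝ (Q ⁻¹' {i}))
    (hweak : ∀ g : (EuclideanSpace ℝ (Fin d) × Fin M) →ᵇ ℝ,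
      Tendsto (fun n => ∫ z, g z ∂(P.map (fun x => (x, Qn n x)))) atTop
        (𝓝 (∫ z, g z ∂(P.map (fun x => (x, Q x)))))) :
    (∀ i : Fin M,
        Tendsto (fun n => (P (symmDiff ((Qn n) ⁻¹' {i}) (Q ⁻¹' {i}))).toReal) atTop (𝓝 0)) ∧
      Tendsto (fun n => dTV (P.map (fun x => (x, Qn n x))) (P.map (fun x => (x, Q x))))
        atTop (𝓝 0) := by
  have hfront i : P (frontier (Q ⁻¹' {i})) = 0 := hP ((hQconv i).addHaar_frontier volume)
  have hne : Tendsto (fun n => (P {x | Qn n x ≠ Q x}).toReal) atTop (𝓝 0) := by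
    rw [← ENNReal.toReal_zero, ENNReal.tendsto_toReal_iff (fun _ => measure_ne_top _ _)
      ENNReal.zero_ne_top]
    exact tendsto_measure_ne_of_tendsto_map_graph hQ hQn hfront hweak
  refine ⟨fun i => squeeze_zero (fun _ => ENNReal.toReal_nonneg) (fun n => ?_) hne,
    squeeze_zero (fun _ => dTV_nonneg _ _) (fun n => ?_) (by simpa using hne.const_mul 2)⟩
  · exact ENNReal.toReal_mono (measure_ne_top _ _)
      (measure_mono (preimage_singleton_symmDiff_subset _ _ i))
  · simpa using dTV_map_le (μ := P) (measurable_id.prodMk (hQn n)) (measurable_id.prodMk hQ)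

/-- If `Q_n, Q` are quantizers on ℝ^d with convex cells, `P` admits a density, and
`PQ_n → PQ` weakly, then `P(B_i^n △ B_i) → 0` for every `i`, and `PQ_n → PQ` in
total variation. -/
theorem convex_cell_weak_to_tv
    (d M : ℕ) (P : Measure (EuclideanSpace ℝ (Fin d))) [IsProbabilityMeasure P]
    (hP : P ≪ volume)
    (Q : EuclideanSpace ℝ (Fin d) → Fin M) (Qn : ℕ → EuclideanSpace ℝ (Fin d) → Fin M)
    (hQ : Measurable Q) (hQn : ∀ n, Measurable (Qn n))
    (hQconv : ∀ i, Convex ℝ (Q ⁻¹' {i})) (hQnconv : ∀ n i, Convex ℝ ((Qn n) ⁻¹' {i}))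
    (hweak : ∀ g : (EuclideanSpace ℝ (Fin d) × Fin M) →ᵇ ℝ,
      Tendsto (fun n => ∫ z, g z ∂(P.map (fun x => (x, Qn n x)))) atTop
        (𝓝 (∫ z, g z ∂(P.map (fun x => (x, Q x)))))) :
    (∀ i : Fin M,
        Tendsto (fun n => (P (symmDiff ((Qn n) ⁻¹' {i}) (Q ⁻¹' {i}))).toReal) atTop (𝓝 0)) ∧
      Tendsto (fun n => dTV (P.map (fun x => (x, Qn n x))) (P.map (fun x => (x, Q x))))
        atTop (𝓝 0) :=
  convex_cell_weak_to_tv_general d M P hP Q Qn hQ hQn hQconv hweak
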